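/- Suppose E : [0,∞) → ℝ is differentiable, satisfies E'(t) + C₁·E(t)^γ ≤ C₂ for all t, with C₁, C₂ > 0 and γ > 1, and set E* = (C₂/C₁)^(1/γ). If E(t₀) > E* for some t₀, then for all t ≥ t₀, E(t) − E* ≤ (E(t₀) − E*)·exp(−C·(t − t₀)) with C = γ·C₁^(1/γ)·C₂^((γ−1)/γ). -/

import Mathlib

set_option maxHeartbeats 800000

open Real Set Filter

theorem stmt_9 (E : ℝ → ℝ) (C₁ C₂ γ t₀ : ℝ) (hC₁ : 0 < C₁) (hC₂ : 0 < C₂) (hγ : 1 < γ)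
    (ht₀ : 0 ≤ t₀)
    (hdiff : ∀ t, 0 ≤ t → DifferentiableAt ℝ E t)
    (hineq : ∀ t, 0 ≤ t → deriv E t + C₁ * E t ^ γ ≤ C₂)
    (h0 : (C₂ / C₁) ^ (1 / γ) < E t₀) :
    ∀ t, t₀ ≤ t →
      E t - (C₂ / C₁) ^ (1 / γ) ≤
        (E t₀ - (C₂ / C₁) ^ (1 / γ)) *
          Real.exp (-(γ * C₁ ^ (1 / γ) * C₂ ^ ((γ - 1) / γ)) * (t - t₀)) := by
  have hγ0 : (0:ℝ) < γ := by linarith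
  set Es : ℝ := (C₂ / C₁) ^ (1 / γ) with hEs
  set K : ℝ := γ * C₁ ^ (1 / γ) * C₂ ^ ((γ - 1) / γ) with hKdef
  have hdivpos : 0 < C₂ / C₁ := div_pos hC₂ hC₁
  have hEs_pos : 0 < Es := Real.rpow_pos_of_pos hdivpos _
  have hEsγ : Es ^ γ = C₂ / C₁ := by
    rw [hEs, ← Real.rpow_mul hdivpos.le, one_div_mul_cancel hγ0.ne', Real.rpow_one]
  have hEsγ1 : Es ^ (γ - 1) = Es ^ γ / Es := Real.rpow_sub_one hEs_pos.ne' γ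
  -- K = γ * C₁ * Es ^ (γ - 1)
  have hK : K = γ * C₁ * Es ^ (γ - 1) := by
    have h1 : Es ^ (γ - 1) = (C₂ / C₁) ^ ((γ - 1) / γ) := by
      rw [hEs, ← Real.rpow_mul hdivpos.le]
      congr 1
      field_simp
    have h2 : (C₂ / C₁) ^ ((γ - 1) / γ) = C₂ ^ ((γ - 1) / γ) / C₁ ^ ((γ - 1) / γ) :=
      Real.div_rpow hC₂.le hC₁.le _
    have h3 : C₁ = C₁ ^ ((γ - 1) / γ) * C₁ ^ (1 / γ) := by
      rw [← Real.rpow_add hC₁, ← add_div, sub_add_cancel,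
        div_self hγ0.ne', Real.rpow_one]
    have hp1 : 0 < C₁ ^ ((γ - 1) / γ) := Real.rpow_pos_of_pos hC₁ _
    have h4 : C₁ ^ (1 / γ) = C₁ / C₁ ^ ((γ - 1) / γ) := by
      rw [eq_div_iff hp1.ne', mul_comm]; exact h3.symm
    rw [hKdef, h1, h2, h4]
    field_simp
  -- key pointwise derivative estimate
  have key : ∀ s, t₀ ≤ s → Es < E s → deriv E s ≤ -(K * (E s - Es)) := by
    intro s hs hEsx
    have hs0 : (0:ℝ) ≤ s := le_trans ht₀ hs
    have h1 := hineq s hs0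
    have hxpos : 0 < E s := lt_trans hEs_pos hEsx
    -- Bernoulli
    have hb : 1 + γ * (E s / Es - 1) ≤ (1 + (E s / Es - 1)) ^ γ := by
      apply one_add_mul_self_le_rpow_one_add _ hγ.le
      have : 0 < E s / Es := div_pos hxpos hEs_pos
      linarith
    rw [add_sub_cancel] at hb
    have hdr : (E s / Es) ^ γ = E s ^ γ / Es ^ γ := Real.div_rpow hxpos.le hEs_pos.le _
    rw [hdr] at hb
    have hEsγpos : 0 < Es ^ γ := Real.rpow_pos_of_pos hEs_pos _
    have hb2 : (1 + γ * (E s / Es - 1)) * Es ^ γ ≤ E s ^ γ := by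
      calc (1 + γ * (E s / Es - 1)) * Es ^ γ ≤ E s ^ γ / Es ^ γ * Es ^ γ :=
            mul_le_mul_of_nonneg_right hb hEsγpos.le
        _ = E s ^ γ := by field_simp
    -- rewrite: (1 + γ*(E s/Es - 1)) * Es^γ = Es^γ + γ * Es^(γ-1) * (E s - Es)
    have hb3 : Es ^ γ + γ * Es ^ (γ - 1) * (E s - Es) ≤ E s ^ γ := by
      have : (1 + γ * (E s / Es - 1)) * Es ^ γ = Es ^ γ + γ * (Es ^ γ / Es) * (E s - Es) := by
        field_simp
      rw [this, ← hEsγ1] at hb2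
      exact hb2
    have hC2eq : C₁ * Es ^ γ = C₂ := by rw [hEsγ]; field_simp
    rw [hK]
    nlinarith [mul_le_mul_of_nonneg_left hb3 hC₁.le]
  -- monotone lemma for g
  have gmono : ∀ a b, t₀ ≤ a → a ≤ b → (∀ s ∈ Icc a b, Es < E s) →
      (E b - Es) * Real.exp (K * (b - t₀)) ≤ (E a - Es) * Real.exp (K * (a - t₀)) := by
    intro a b hat₀ hab hEab
    set g : ℝ → ℝ := fun s => (E s - Es) * Real.exp (K * (s - t₀)) with hg
    have hder : ∀ s ∈ Icc a b, HasDerivAt g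
        (deriv E s * Real.exp (K * (s - t₀)) + (E s - Es) * (Real.exp (K * (s - t₀)) * K)) s := by
      intro s hs
      have h0s : (0:ℝ) ≤ s := le_trans ht₀ (le_trans hat₀ hs.1)
      have h1 : HasDerivAt (fun x => E x - Es) (deriv E s) s :=
        (hdiff s h0s).hasDerivAt.sub_const Es
      have h2 : HasDerivAt (fun x => K * (x - t₀)) (K * 1) s :=
        ((hasDerivAt_id s).sub_const t₀).const_mul K
      have h3 := h2.exp
      rw [mul_one] at h3
      exact h1.mul h3
    have hcont : ContinuousOn g (Icc a b) := fun s hs =>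
      (hder s hs).continuousAt.continuousWithinAt
    have hdiffOn : DifferentiableOn ℝ g (interior (Icc a b)) := by
      rw [interior_Icc]
      exact fun s hs => ((hder s (Ioo_subset_Icc_self hs)).differentiableAt).differentiableWithinAt
    have hnonpos : ∀ s ∈ interior (Icc a b), deriv g s ≤ 0 := by
      rw [interior_Icc]
      intro s hs
      have hsI : s ∈ Icc a b := Ioo_subset_Icc_self hs
      rw [(hder s hsI).deriv]
      have hk := key s (le_trans hat₀ hsI.1) (hEab s hsI)
      have hep := Real.exp_pos (K * (s - t₀))
      nlinarith
    have := antitoneOn_of_deriv_nonpos (convex_Icc a b) hcont hdiffOn hnonpos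
    exact this ⟨le_refl a, hab⟩ ⟨hab, le_refl b⟩ hab
  -- main argument
  intro t htt
  have h0t : (0:ℝ) ≤ t := le_trans ht₀ htt
  have hexp_pos := Real.exp_pos (-K * (t - t₀))
  by_cases hcase : E t ≤ Es
  · nlinarith [Real.exp_pos (-K * (t - t₀))]
  push_neg at hcase
  have hall : ∀ s ∈ Icc t₀ t, Es < E s := by
    by_contra hcon
    push_neg at hcon
    obtain ⟨s₀, hs₀, hEs₀⟩ := hcon
    set S : Set ℝ := {s | s ∈ Icc t₀ t ∧ E s ≤ Es} with hS
    have hSne : S.Nonempty := ⟨s₀, hs₀, hEs₀⟩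
    have hSbdd : BddAbove S := ⟨t, fun x hx => hx.1.2⟩
    have hScl : IsClosed S := by
      have hcontE : ContinuousOn E (Icc t₀ t) := fun s hs =>
        ((hdiff s (le_trans ht₀ hs.1)).continuousAt).continuousWithinAt
      have hSeq : S = Icc t₀ t ∩ E ⁻¹' Iic Es := rfl
      rw [hSeq]
      exact hcontE.preimage_isClosed_of_isClosed isClosed_Icc isClosed_Iic
    have hmem : sSup S ∈ S := hScl.csSup_mem hSne hSbdd
    set c : ℝ := sSup S with hc
    have hct : c < t := by
      rcases lt_or_eq_of_le hmem.1.2 with h | h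
      · exact h
      · exact absurd (h ▸ hmem.2) (not_le.mpr hcase)
    have hc0 : (0:ℝ) ≤ c := le_trans ht₀ hmem.1.1
    -- for a in (c, t], gmono applies on [a, t]
    have hga : ∀ a ∈ Ioc c t,
        (E t - Es) * Real.exp (K * (t - t₀)) ≤ (E a - Es) * Real.exp (K * (a - t₀)) := by
      intro a ha
      apply gmono a t (le_trans hmem.1.1 ha.1.le) ha.2
      intro s hs
      by_contra hle
      push_neg at hle
      have hsS : s ∈ S := ⟨⟨le_trans hmem.1.1 (le_trans ha.1.le hs.1), hs.2⟩, hle⟩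
      have : s ≤ c := le_csSup hSbdd hsS
      have : c < s := lt_of_lt_of_le ha.1 hs.1
      linarith
    -- take the limit a → c⁺
    have hgc : Tendsto (fun a => (E a - Es) * Real.exp (K * (a - t₀))) (nhdsWithin c (Ioi c))
        (nhds ((E c - Es) * Real.exp (K * (c - t₀)))) := by
      have : ContinuousAt (fun a => (E a - Es) * Real.exp (K * (a - t₀))) c := by
        apply ContinuousAt.mul
        · exact (hdiff c hc0).continuousAt.sub continuousAt_const
        · exact (Real.continuous_exp.comp
            (continuous_const.mul (continuous_id.sub continuous_const))).continuousAt
      exact this.tendsto.mono_left nhdsWithin_le_nhds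
    have hlim : (E t - Es) * Real.exp (K * (t - t₀)) ≤ (E c - Es) * Real.exp (K * (c - t₀)) := by
      apply ge_of_tendsto hgc
      filter_upwards [Ioc_mem_nhdsGT_of_mem ⟨le_refl c, hct⟩] with a ha
      exact hga a ha
    have h1 : (E c - Es) * Real.exp (K * (c - t₀)) ≤ 0 :=
      mul_nonpos_of_nonpos_of_nonneg (by linarith [hmem.2]) (Real.exp_pos _).le
    nlinarith [Real.exp_pos (K * (t - t₀))]
  have hmain := gmono t₀ t (le_refl t₀) htt hall
  rw [sub_self, mul_zero, Real.exp_zero, mul_one] at hmain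
  have hE := Real.exp_pos (K * (t - t₀))
  rw [neg_mul, Real.exp_neg, ← div_eq_mul_inv, le_div_iff₀ hE]
  exact hmain
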